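/- arXiv:1610.10083 — 2 statements merged into one kernel-verified Lean document; each statement's English description precedes it below -/
import Mathlib

section
/- Define a relation on ℝ² (2D Minkowski spacetime with metric dt² − dx²) times {−,+} by: (p, ε) ≼ (q, ε) iff q − p is future-directed causal (q₀ − p₀ ≥ |q₁ − p₁|), and (p, −) ≼ (q, +) iff q − p is future-directed causal with Minkowski proper time √((q₀−p₀)² − (q₁−p₁)²) ≥ π/(2m), and (p,+) ≼ (q,−) likewise. Then this relation is a partial order on ℝ² × {−,+}. -/
open Real

/-- `q - p` is a future-directed causal vector in 2D Minkowski spacetime. -/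
def MinkCausal (p q : ℝ × ℝ) : Prop := |q.2 - p.2| ≤ q.1 - p.1

/-- Minkowski proper time between two causally related events. -/
noncomputable def MinkTau (p q : ℝ × ℝ) : ℝ := Real.sqrt ((q.1 - p.1) ^ 2 - (q.2 - p.2) ^ 2)

lemma rev_triangle (t1 x1 t2 x2 : ℝ) (h1 : |x1| ≤ t1) (h2 : |x2| ≤ t2) :
    Real.sqrt (t1 ^ 2 - x1 ^ 2) + Real.sqrt (t2 ^ 2 - x2 ^ 2) ≤
      Real.sqrt ((t1 + t2) ^ 2 - (x1 + x2) ^ 2) := by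
  have hx1 := abs_le.mp h1
  have hx2 := abs_le.mp h2
  have hA : (0:ℝ) ≤ t1 ^ 2 - x1 ^ 2 := by nlinarith [hx1.1, hx1.2]
  have hB : (0:ℝ) ≤ t2 ^ 2 - x2 ^ 2 := by nlinarith [hx2.1, hx2.2]
  have hd : (0:ℝ) ≤ t1 * t2 - x1 * x2 := by nlinarith [hx1.1, hx1.2, hx2.1, hx2.2]
  have hAB : Real.sqrt ((t1 ^ 2 - x1 ^ 2) * (t2 ^ 2 - x2 ^ 2)) ≤ t1 * t2 - x1 * x2 := by
    rw [show t1 * t2 - x1 * x2 = Real.sqrt ((t1 * t2 - x1 * x2) ^ 2) by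
      rw [Real.sqrt_sq hd]]
    apply Real.sqrt_le_sqrt
    nlinarith [sq_nonneg (t1 * x2 - t2 * x1)]
  rw [Real.sqrt_mul hA] at hAB
  have hsA := Real.sq_sqrt hA
  have hsB := Real.sq_sqrt hB
  have hnA := Real.sqrt_nonneg (t1 ^ 2 - x1 ^ 2)
  have hnB := Real.sqrt_nonneg (t2 ^ 2 - x2 ^ 2)
  rw [show (t1 + t2) ^ 2 - (x1 + x2) ^ 2 = (t1 ^ 2 - x1 ^ 2) + (t2 ^ 2 - x2 ^ 2) + 2 * (t1 * t2 - x1 * x2) by ring]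
  rw [show √(t1 ^ 2 - x1 ^ 2) + √(t2 ^ 2 - x2 ^ 2) = √((√(t1 ^ 2 - x1 ^ 2) + √(t2 ^ 2 - x2 ^ 2)) ^ 2) from (Real.sqrt_sq (by positivity)).symm]
  apply Real.sqrt_le_sqrt
  nlinarith [hAB, hsA, hsB]

lemma mink_rev (p q r : ℝ × ℝ) (h1 : MinkCausal p q) (h2 : MinkCausal q r) :
    MinkTau p q + MinkTau q r ≤ MinkTau p r := by
  unfold MinkCausal at h1 h2
  unfold MinkTau
  have := rev_triangle (q.1 - p.1) (q.2 - p.2) (r.1 - q.1) (r.2 - q.2) h1 h2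
  convert this using 3 <;> ring

/-- The causal relation on the almost commutative spacetime `ℝ² × {-,+}` of a fermion of
mass `m`: causal in the base, with chirality flips requiring proper time `≥ π/(2m)`. -/
def ZitterRel (m : ℝ) (a b : (ℝ × ℝ) × Bool) : Prop :=
  MinkCausal a.1 b.1 ∧ (a.2 = b.2 ∨ π / (2 * m) ≤ MinkTau a.1 b.1)

/-- The Zitterbewegung causal relation on `ℝ² × {-,+}` is a partial order. -/
theorem zitterRel_partialOrder (m : ℝ) (hm : 0 < m) :
    IsPartialOrder ((ℝ × ℝ) × Bool) (ZitterRel m) := by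
  refine { refl := ?_, trans := ?_, antisymm := ?_ }
  · intro a
    exact ⟨by simp [MinkCausal], Or.inl rfl⟩
  · intro a b c ⟨hab, hab2⟩ ⟨hbc, hbc2⟩
    have hac : MinkCausal a.1 c.1 := by
      unfold MinkCausal at *
      have := abs_sub_abs_le_abs_sub (c.1.2 - a.1.2) (c.1.2 - b.1.2)
      have h := abs_add_le (b.1.2 - a.1.2) (c.1.2 - b.1.2)
      calc |c.1.2 - a.1.2| = |(b.1.2 - a.1.2) + (c.1.2 - b.1.2)| := by ring_nf
        _ ≤ |b.1.2 - a.1.2| + |c.1.2 - b.1.2| := abs_add_le _ _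
        _ ≤ (b.1.1 - a.1.1) + (c.1.1 - b.1.1) := add_le_add hab hbc
        _ = c.1.1 - a.1.1 := by ring
    refine ⟨hac, ?_⟩
    have hrev := mink_rev a.1 b.1 c.1 hab hbc
    have hnab := Real.sqrt_nonneg ((b.1.1 - a.1.1) ^ 2 - (b.1.2 - a.1.2) ^ 2)
    have hnbc := Real.sqrt_nonneg ((c.1.1 - b.1.1) ^ 2 - (c.1.2 - b.1.2) ^ 2)
    rcases hab2 with h1 | h1
    · rcases hbc2 with h2 | h2
      · exact Or.inl (h1.trans h2)
      · refine Or.inr ?_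
        calc π / (2 * m) ≤ MinkTau b.1 c.1 := h2
          _ ≤ MinkTau a.1 c.1 := by unfold MinkTau at *; linarith
    · refine Or.inr ?_
      calc π / (2 * m) ≤ MinkTau a.1 b.1 := h1
        _ ≤ MinkTau a.1 c.1 := by unfold MinkTau at *; linarith
  · intro a b hh hh'
    obtain ⟨hab, hc⟩ := hh
    obtain ⟨hba, -⟩ := hh'
    unfold MinkCausal at hab hba
    have h1 : a.1.1 = b.1.1 := by
      have := abs_nonneg (b.1.2 - a.1.2)
      have := abs_nonneg (a.1.2 - b.1.2)
      linarith
    have h2 : a.1.2 = b.1.2 := by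
      rw [h1] at hab hba
      have := abs_nonneg (b.1.2 - a.1.2)
      have h := abs_le.mp hab
      have h' := abs_le.mp hba
      linarith [h.1, h.2, h'.1, h'.2]
    -- antisymmetry: also need a.2 = b.2
    have hb2 : a.2 = b.2 := by
      rcases hc with h | h
      · exact h
      · exfalso
        have : MinkTau a.1 b.1 = 0 := by
          unfold MinkTau
          rw [h1, h2]; simp
        rw [this] at h
        have hpi : (0:ℝ) < π / (2 * m) := by positivity
        linarith
    exact Prod.ext (Prod.ext h1 h2) hb2
end

section
/- In the partial order on ℝ² × {−,+} modelling the almost commutative spacetime of a fermion of mass m (causal in the base, with chirality flips requiring accumulated proper time ≥ π/(2m)), a chain of states alternating chirality n times starting and ending at base points p and q requires τ(p, q) ≥ n·π/(2m); hence the frequency of chirality flips along any causal evolution is bounded by 2m/π per unit proper time. -/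
open Real

/-! Proper time is superadditive along causal chains (the reverse triangle inequality, whose
core is the reverse Cauchy–Schwarz inequality `(a² - b²)(c² - d²) ≤ (ac - bd)²` for the
Lorentzian form), and every chirality flip costs at least `π/(2m)` of it. -/

theorem sqrt_sq_sub_sq_add_le {a b c d : ℝ} (hab : |b| ≤ a) (hcd : |d| ≤ c) :
    √(a ^ 2 - b ^ 2) + √(c ^ 2 - d ^ 2) ≤ √((a + c) ^ 2 - (b + d) ^ 2) := by
  have hb2 : b ^ 2 ≤ a ^ 2 := sq_le_sq' (abs_le.mp hab).1 (abs_le.mp hab).2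
  have hd2 : d ^ 2 ≤ c ^ 2 := sq_le_sq' (abs_le.mp hcd).1 (abs_le.mp hcd).2
  have hbd : b * d ≤ a * c := calc
    b * d ≤ |b| * |d| := by rw [← abs_mul]; exact le_abs_self _
    _ ≤ a * c := mul_le_mul hab hcd (abs_nonneg d) ((abs_nonneg b).trans hab)
  have hcross : √(a ^ 2 - b ^ 2) * √(c ^ 2 - d ^ 2) ≤ a * c - b * d := by
    rw [← sqrt_mul (by linarith), sqrt_le_left (by linarith)]
    nlinarith [sq_nonneg (a * d - b * c)]
  rw [le_sqrt (by positivity) (by nlinarith [abs_nonneg b, abs_nonneg d]), add_sq,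
    sq_sqrt (by linarith), sq_sqrt (by linarith)]
  linarith

namespace MinkCausal

theorem refl (p : ℝ × ℝ) : MinkCausal p p := by
  simp [MinkCausal]

theorem trans {p q r : ℝ × ℝ} (hpq : MinkCausal p q) (hqr : MinkCausal q r) :
    MinkCausal p r := by
  unfold MinkCausal at *
  rw [abs_le] at *
  constructor <;> linarith [hpq.1, hpq.2, hqr.1, hqr.2]

theorem chain {n : ℕ} {p : Fin (n + 1) → ℝ × ℝ}
    (hp : ∀ i : Fin n, MinkCausal (p i.castSucc) (p i.succ)) (k : Fin (n + 1)) :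
    MinkCausal (p 0) (p k) :=
  Fin.induction (refl _) (fun i hi => hi.trans (hp i)) k

end MinkCausal

theorem minkTau_add_le {p q r : ℝ × ℝ} (hpq : MinkCausal p q) (hqr : MinkCausal q r) :
    MinkTau p q + MinkTau q r ≤ MinkTau p r := by
  simpa only [MinkTau, sub_add_sub_cancel'] using sqrt_sq_sub_sq_add_le hpq hqr

theorem sum_minkTau_le {n : ℕ} {p : Fin (n + 1) → ℝ × ℝ}
    (hp : ∀ i : Fin n, MinkCausal (p i.castSucc) (p i.succ)) :
    ∑ i : Fin n, MinkTau (p i.castSucc) (p i.succ) ≤ MinkTau (p 0) (p (Fin.last n)) := by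
  induction n with
  | zero => simp [MinkTau]
  | succ n ih =>
    have hinit : ∀ i : Fin n, MinkCausal (p i.castSucc.castSucc) (p i.succ.castSucc) := by
      intro i
      simpa only [Fin.succ_castSucc] using hp i.castSucc
    have hfirst := ih (p := fun i => p i.castSucc) hinit
    have hcausal := MinkCausal.chain (p := fun i => p i.castSucc) hinit (Fin.last n)
    simp only [Fin.castSucc_zero] at hfirst hcausal
    rw [Fin.sum_univ_castSucc]
    have hlast := minkTau_add_le hcausal (hp (Fin.last n))
    simp only [Fin.succ_castSucc, Fin.succ_last] at hlast ⊢
    linarith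

theorem ZitterRel.le_minkTau_of_ne {m : ℝ} {a b : (ℝ × ℝ) × Bool} (h : ZitterRel m a b)
    (hab : a.2 ≠ b.2) : π / (2 * m) ≤ MinkTau a.1 b.1 :=
  h.2.resolve_left hab

theorem zitter_frequency_bound_general (m : ℝ) (n : ℕ)
    (p : Fin (n + 1) → ℝ × ℝ) (ε : Fin (n + 1) → Bool)
    (hstep : ∀ i : Fin n, ZitterRel m (p i.castSucc, ε i.castSucc) (p i.succ, ε i.succ))
    (hflip : ∀ i : Fin n, ε i.succ = ! ε i.castSucc) :
    (n : ℝ) * (π / (2 * m)) ≤ MinkTau (p 0) (p (Fin.last n)) := by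
  have hflip_tau (i : Fin n) : π / (2 * m) ≤ MinkTau (p i.castSucc) (p i.succ) :=
    (hstep i).le_minkTau_of_ne (by simp only [hflip i]; exact Bool.self_ne_not _)
  calc (n : ℝ) * (π / (2 * m)) = ∑ _i : Fin n, π / (2 * m) := by simp
    _ ≤ ∑ i : Fin n, MinkTau (p i.castSucc) (p i.succ) := Finset.sum_le_sum fun i _ => hflip_tau i
    _ ≤ MinkTau (p 0) (p (Fin.last n)) := sum_minkTau_le fun i => (hstep i).1

/-- A causal chain alternating chirality `n` times from base point `p⁰` to `pⁿ`
requires total proper time at least `n · π/(2m)`: the frequency of chirality flips is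
bounded by `2m/π` per unit proper time. -/
theorem zitter_frequency_bound (m : ℝ) (hm : 0 < m) (n : ℕ)
    (p : Fin (n + 1) → ℝ × ℝ) (ε : Fin (n + 1) → Bool)
    (hstep : ∀ i : Fin n, ZitterRel m (p i.castSucc, ε i.castSucc) (p i.succ, ε i.succ))
    (hflip : ∀ i : Fin n, ε i.succ = ! ε i.castSucc) :
    (n : ℝ) * (π / (2 * m)) ≤ MinkTau (p 0) (p (Fin.last n)) :=
  zitter_frequency_bound_general m n p ε hstep hflip
end
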